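/- The discriminant in u of the quartic polynomial λ₁ u⁴ + λ₂ (u-1)²(u+1) (obtained from σ₁ = u⁴ and σ₂ = (u-v)²v(u+v) by setting v = 1) equals λ₁ λ₂³ (256λ₁² - 107λ₁λ₂ - 32λ₂²), up to a nonzero constant multiple, and the quadratic 256λ₁² - 107λ₁λ₂ - 32λ₂² admits two distinct roots [λ₁:λ₂] ∈ ℙ¹(ℂ) with λ₁ ≠ 0 and λ₂ ≠ 0. -/

import Mathlib

/-!
Comparing coefficients (Vieta) writes the coefficients `b, c, d, e` of `a X⁴ + b X³ + c X² + d X + e`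
as `a` times the signed elementary symmetric functions of the roots. In these, `∏_{i<j} (rᵢ - rⱼ)²`
is the classical quartic discriminant, which is homogeneous of degree 6, so
`a⁶ ∏_{i<j} (rᵢ - rⱼ)² = Disc(a, b, c, d, e)`; for the pencil, `(a, b, c, d, e) = (λ₁, λ₂, -λ₂, -λ₂, λ₂)`
and this factors as `λ₁ λ₂³ (256λ₁² - 107λ₁λ₂ - 32λ₂²)`. The quadratic `256t² - 107t - 32` has
discriminant `51² · 17 ≠ 0` and nonzero constant term, so its two roots are distinct and nonzero.
-/

open Polynomial Finset

section

variable {R : Type*} [CommRing R]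

def quarticDisc (a b c d e : R) : R :=
  256 * a ^ 3 * e ^ 3 - 192 * a ^ 2 * b * d * e ^ 2 - 128 * a ^ 2 * c ^ 2 * e ^ 2
    + 144 * a ^ 2 * c * d ^ 2 * e - 27 * a ^ 2 * d ^ 4 + 144 * a * b ^ 2 * c * e ^ 2
    - 6 * a * b ^ 2 * d ^ 2 * e - 80 * a * b * c ^ 2 * d * e + 18 * a * b * c * d ^ 3
    + 16 * a * c ^ 4 * e - 4 * a * c ^ 3 * d ^ 2 - 27 * b ^ 4 * e ^ 2 + 18 * b ^ 3 * c * d * e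
    - 4 * b ^ 3 * d ^ 3 - 4 * b ^ 2 * c ^ 3 * e + b ^ 2 * c ^ 2 * d ^ 2

theorem quarticDisc_mul (a b c d e : R) :
    quarticDisc a (a * b) (a * c) (a * d) (a * e) = a ^ 6 * quarticDisc 1 b c d e := by
  unfold quarticDisc; ring

theorem quarticDisc_one_of_roots (r₀ r₁ r₂ r₃ : R) :
    quarticDisc 1 (-(r₀ + r₁ + r₂ + r₃))
        (r₀ * r₁ + r₀ * r₂ + r₀ * r₃ + r₁ * r₂ + r₁ * r₃ + r₂ * r₃)
        (-(r₀ * r₁ * r₂ + r₀ * r₁ * r₃ + r₀ * r₂ * r₃ + r₁ * r₂ * r₃)) (r₀ * r₁ * r₂ * r₃) =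
      (r₀ - r₁) ^ 2 * (r₀ - r₂) ^ 2 * (r₀ - r₃) ^ 2 * (r₁ - r₂) ^ 2 * (r₁ - r₃) ^ 2
        * (r₂ - r₃) ^ 2 := by
  unfold quarticDisc; ring

theorem prod_X_sub_C_fin_four (r : Fin 4 → R) :
    ∏ i, (X - C (r i)) = X ^ 4 + C (-(r 0 + r 1 + r 2 + r 3)) * X ^ 3
      + C (r 0 * r 1 + r 0 * r 2 + r 0 * r 3 + r 1 * r 2 + r 1 * r 3 + r 2 * r 3) * X ^ 2
      + C (-(r 0 * r 1 * r 2 + r 0 * r 1 * r 3 + r 0 * r 2 * r 3 + r 1 * r 2 * r 3)) * X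
      + C (r 0 * r 1 * r 2 * r 3) := by
  simp only [Fin.prod_univ_four, map_neg, map_add, map_mul]; ring

theorem coeffs_eq_of_eq_C_mul_monic_quartic {a b c d e b' c' d' e' : R}
    (h : C a * X ^ 4 + C b * X ^ 3 + C c * X ^ 2 + C d * X + C e
      = C a * (X ^ 4 + C b' * X ^ 3 + C c' * X ^ 2 + C d' * X + C e')) :
    b = a * b' ∧ c = a * c' ∧ d = a * d' ∧ e = a * e' := by
  have hk := fun k => congrArg (coeff · k) h
  exact ⟨by simpa using hk 3, by simpa using hk 2, by simpa using hk 1, by simpa using hk 0⟩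

theorem prod_filter_lt_fin_four {M : Type*} [CommMonoid M] (f : Fin 4 → Fin 4 → M) :
    ∏ i, ∏ j ∈ univ.filter (fun j => i < j), f i j
      = f 0 1 * f 0 2 * f 0 3 * f 1 2 * f 1 3 * f 2 3 := by
  simp only [prod_filter, Fin.prod_univ_four]
  simp [mul_assoc]

theorem quarticDisc_eq_of_eq_C_mul_prod {a b c d e : R} (r : Fin 4 → R)
    (h : C a * X ^ 4 + C b * X ^ 3 + C c * X ^ 2 + C d * X + C e = C a * ∏ i, (X - C (r i))) :
    a ^ 6 * ∏ i, ∏ j ∈ univ.filter (fun j => i < j), (r i - r j) ^ 2 = quarticDisc a b c d e := by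
  rw [prod_X_sub_C_fin_four] at h
  obtain ⟨rfl, rfl, rfl, rfl⟩ := coeffs_eq_of_eq_C_mul_monic_quartic h
  rw [quarticDisc_mul, quarticDisc_one_of_roots, prod_filter_lt_fin_four]

theorem pencil_eq_quartic (l₁ l₂ : R) :
    C l₁ * X ^ 4 + C l₂ * (X - 1) ^ 2 * (X + 1)
      = C l₁ * X ^ 4 + C l₂ * X ^ 3 + C (-l₂) * X ^ 2 + C (-l₂) * X + C l₂ := by
  simp only [map_neg]; ring

theorem quarticDisc_pencil (l₁ l₂ : R) :
    quarticDisc l₁ l₂ (-l₂) (-l₂) l₂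
      = l₁ * l₂ ^ 3 * (256 * l₁ ^ 2 - 107 * l₁ * l₂ - 32 * l₂ ^ 2) := by
  unfold quarticDisc; ring

end

theorem exists_ne_roots_ne_zero_of_discrim_ne_zero {K : Type*} [Field K] [IsAlgClosed K]
    [NeZero (2 : K)] {a b c : K} (ha : a ≠ 0) (hc : c ≠ 0) (hd : discrim a b c ≠ 0) :
    ∃ t₁ t₂ : K, t₁ ≠ t₂ ∧ t₁ ≠ 0 ∧ t₂ ≠ 0 ∧
      ∀ t, a * (t * t) + b * t + c = 0 ↔ t = t₁ ∨ t = t₂ := by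
  obtain ⟨s, hs⟩ := IsAlgClosed.exists_eq_mul_self (discrim a b c)
  have hroots := quadratic_eq_zero_iff ha hs
  have hs0 : s ≠ 0 := by rintro rfl; exact hd (by simpa using hs)
  have hroot_ne_zero : ∀ t, a * (t * t) + b * t + c = 0 → t ≠ 0 := by
    rintro t ht rfl; exact hc (by simpa using ht)
  refine ⟨_, _, ?_, hroot_ne_zero _ ((hroots _).2 (.inl rfl)),
    hroot_ne_zero _ ((hroots _).2 (.inr rfl)), hroots⟩
  rw [Ne, div_left_inj' (mul_ne_zero two_ne_zero ha)]
  intro h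
  exact hs0 ((mul_eq_zero.1 (by linear_combination h : (2 : K) * s = 0)).resolve_left two_ne_zero)

/-- The discriminant in `u` of the quartic `λ₁ u⁴ + λ₂ (u-1)²(u+1)`
(computed, for `λ₁ ≠ 0`, as `λ₁⁶ ∏_{i<j} (rᵢ - rⱼ)²` over the four roots)
equals `λ₁ λ₂³ (256λ₁² - 107λ₁λ₂ - 32λ₂²)` up to a nonzero constant multiple,
and the quadratic `256λ₁² - 107λ₁λ₂ - 32λ₂²` has two distinct projective
roots `[λ₁:λ₂]` with `λ₁ ≠ 0` and `λ₂ ≠ 0`. -/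
theorem stmt_6 :
    (∃ c : ℂ, c ≠ 0 ∧
      ∀ l₁ l₂ : ℂ, ∀ r : Fin 4 → ℂ, l₁ ≠ 0 →
        (C l₁ * X ^ 4 + C l₂ * (X - 1) ^ 2 * (X + 1)
          = C l₁ * ∏ i, (X - C (r i))) →
        l₁ ^ 6 * ∏ i, ∏ j ∈ Finset.univ.filter (fun j => i < j), (r i - r j) ^ 2
          = c * (l₁ * l₂ ^ 3 * (256 * l₁ ^ 2 - 107 * l₁ * l₂ - 32 * l₂ ^ 2))) ∧
    (∃ t₁ t₂ : ℂ, t₁ ≠ t₂ ∧ t₁ ≠ 0 ∧ t₂ ≠ 0 ∧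
      ∀ t : ℂ, 256 * t ^ 2 - 107 * t - 32 = 0 ↔ t = t₁ ∨ t = t₂) := by
  refine ⟨⟨1, one_ne_zero, fun l₁ l₂ r _ h => ?_⟩, ?_⟩
  · rw [one_mul, ← quarticDisc_pencil]
    exact quarticDisc_eq_of_eq_C_mul_prod r ((pencil_eq_quartic l₁ l₂).symm.trans h)
  · obtain ⟨t₁, t₂, hne, h₁, h₂, hroots⟩ :=
      exists_ne_roots_ne_zero_of_discrim_ne_zero (a := (256 : ℂ)) (b := -107) (c := -32)
        (by norm_num) (by norm_num) (by norm_num [discrim])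
    refine ⟨t₁, t₂, hne, h₁, h₂, fun t => ?_⟩
    rw [← hroots t, show 256 * t ^ 2 - 107 * t - 32 = 256 * (t * t) + -107 * t + -32 by ring]
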